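/- Let O be a discrete valuation ring with uniformizer ϖ and fraction field F, let n ≥ 1, and let K be a subgroup of GL_{2n}(O) (viewed inside GL_{2n}(F)) containing every matrix [[1_n, X],[0, 1_n]] with X ∈ M_n(O). Fix an integer β ≥ 0 and set t := ι(ϖ·1_n, 1_n) ∈ GL_{2n}(F). Then for all h₁, h₂ ∈ GL_n(O): ι(h₁,h₂) ∈ K ∩ ξ t^β K t^{-β} ξ^{-1} if and only if ι(h₁,h₂) ∈ K ∩ ι(1_n,w_n)·K·ι(1_n,w_n) and h₁ − h₂ ∈ ϖ^β M_n(O) (equivalently, h₁h₂^{-1} ∈ 1_n + ϖ^β M_n(O)). -/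

import Mathlib

open Matrix

/-- The `n × n` antidiagonal permutation matrix `w_n`, with `(i,j)` entry `δ_{i, n+1-j}`. -/
def wMat (n : ℕ) (R : Type*) [CommRing R] : Matrix (Fin n) (Fin n) R :=
  fun i j => if (i : ℕ) + (j : ℕ) + 1 = n then 1 else 0

/-- The block diagonal matrix `ι(A, D) = [[A, 0], [0, D]]`. -/
def iotaBlk {n : ℕ} {R : Type*} [CommRing R] (A D : Matrix (Fin n) (Fin n) R) :
    Matrix (Fin n ⊕ Fin n) (Fin n ⊕ Fin n) R :=
  Matrix.fromBlocks A 0 0 D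

/-- The matrix `ξ = [[1_n, w_n], [0_n, w_n]]`. -/
def xiMat (n : ℕ) (R : Type*) [CommRing R] : Matrix (Fin n ⊕ Fin n) (Fin n ⊕ Fin n) R :=
  Matrix.fromBlocks 1 (wMat n R) 0 (wMat n R)

/-- The matrix `ξ⁻¹ = [[1_n, -1_n], [0_n, w_n]]`. -/
def xiInvMat (n : ℕ) (R : Type*) [CommRing R] : Matrix (Fin n ⊕ Fin n) (Fin n ⊕ Fin n) R :=
  Matrix.fromBlocks 1 (-1) 0 (wMat n R)

/-- The matrix `t(a) = ι(a·1_n, 1_n)`. -/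
def tMat (n : ℕ) (R : Type*) [CommRing R] (a : R) :
    Matrix (Fin n ⊕ Fin n) (Fin n ⊕ Fin n) R :=
  iotaBlk (a • (1 : Matrix (Fin n) (Fin n) R)) 1

/-! Conjugating `ι(h₁, h₂)` by `(ξ t^β)⁻¹` gives `[[h₁, ϖ^{-β} (h₁ - h₂) w], [0, w h₂ w]]`,
and conjugating it by `ι(1, w)` gives `ι(h₁, w h₂ w)`. Integrality of the first matrix forces
`h₁ ≡ h₂ mod ϖ^β`; conversely, under this congruence the first matrix is `[[1, X], [0, 1]]`
times the second one for an integral `X`, and such unipotent factors lie in `K`. -/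

theorem exists_mem_eq_mul_mul_iff {M : Type*} [Monoid M] {K : Set M} {a b : M}
    (hab : a * b = 1) (hba : b * a = 1) (g : M) :
    (∃ k ∈ K, g = a * k * b) ↔ b * g * a ∈ K := by
  constructor
  · rintro ⟨k, hk, rfl⟩
    rwa [show b * (a * k * b) * a = b * a * k * (b * a) by simp only [mul_assoc], hba,
      one_mul, mul_one]
  · intro h
    refine ⟨_, h, ?_⟩
    rw [show a * (b * g * a) * b = a * b * g * (a * b) by simp only [mul_assoc], hab,
      one_mul, mul_one]

section BlockMatrices

variable {n : ℕ} {R : Type*} [CommRing R]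

theorem wMat_apply (i j : Fin n) : wMat n R i j = if j = i.rev then 1 else 0 := by
  have h : (i : ℕ) + j + 1 = n ↔ j = i.rev := by
    rw [Fin.ext_iff, Fin.val_rev]
    omega
  simp [wMat, h]

theorem mul_wMat_apply (A : Matrix (Fin n) (Fin n) R) (i j : Fin n) :
    (A * wMat n R) i j = A i j.rev := by
  rw [Matrix.mul_apply, Finset.sum_eq_single j.rev]
  · simp [wMat_apply]
  · intro k _ hk
    simp only [wMat_apply, mul_ite, mul_one, mul_zero, ite_eq_right_iff]
    rintro rfl
    simp at hk
  · simp

theorem wMat_mul_self : wMat n R * wMat n R = 1 := by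
  ext i j
  simp [mul_wMat_apply, wMat_apply, Matrix.one_apply, eq_comm]

theorem wMat_map {S : Type*} [CommRing S] (f : R →+* S) : (wMat n R).map f = wMat n S := by
  ext i j
  simp [wMat, apply_ite f]

theorem iotaBlk_mul_iotaBlk (A D A' D' : Matrix (Fin n) (Fin n) R) :
    iotaBlk A D * iotaBlk A' D' = iotaBlk (A * A') (D * D') := by
  simp [iotaBlk, Matrix.fromBlocks_multiply]

theorem iotaBlk_one_one : iotaBlk (1 : Matrix (Fin n) (Fin n) R) 1 = 1 :=
  Matrix.fromBlocks_one

theorem tMat_mul (a b : R) : tMat n R a * tMat n R b = tMat n R (a * b) := by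
  simp [tMat, iotaBlk_mul_iotaBlk, smul_smul, mul_comm]

theorem tMat_one : tMat n R 1 = 1 := by
  simp [tMat, iotaBlk_one_one]

theorem tMat_pow (a : R) (k : ℕ) : tMat n R a ^ k = tMat n R (a ^ k) := by
  induction k with
  | zero => simp [tMat_one]
  | succ k ih => rw [pow_succ, ih, tMat_mul, pow_succ]

theorem xiMat_mul_xiInvMat : xiMat n R * xiInvMat n R = 1 := by
  simp [xiMat, xiInvMat, Matrix.fromBlocks_multiply, wMat_mul_self]

theorem xiInvMat_mul_xiMat : xiInvMat n R * xiMat n R = 1 := by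
  simp [xiMat, xiInvMat, Matrix.fromBlocks_multiply, wMat_mul_self]

theorem tMat_mul_xiInvMat_mul_iotaBlk_mul {a b : R} (hab : a * b = 1)
    (H₁ H₂ : Matrix (Fin n) (Fin n) R) :
    tMat n R b * xiInvMat n R * iotaBlk H₁ H₂ * (xiMat n R * tMat n R a) =
      Matrix.fromBlocks H₁ (b • ((H₁ - H₂) * wMat n R)) 0 (wMat n R * H₂ * wMat n R) := by
  simp [tMat, xiInvMat, xiMat, iotaBlk, Matrix.fromBlocks_multiply, smul_smul, hab, sub_mul,
    smul_sub, mul_assoc, ← sub_eq_add_neg]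

theorem exists_mem_xiMat_conj_iff {K : Set (Matrix (Fin n ⊕ Fin n) (Fin n ⊕ Fin n) R)} {a b : R}
    (hab : a * b = 1) (g : Matrix (Fin n ⊕ Fin n) (Fin n ⊕ Fin n) R) :
    (∃ k ∈ K, g = xiMat n R * tMat n R a * k * tMat n R b * xiInvMat n R) ↔
      tMat n R b * xiInvMat n R * g * (xiMat n R * tMat n R a) ∈ K := by
  have hxt : xiMat n R * tMat n R a * (tMat n R b * xiInvMat n R) = 1 := by
    rw [mul_assoc, ← mul_assoc (tMat n R a), tMat_mul, hab, tMat_one, Matrix.one_mul,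
      xiMat_mul_xiInvMat]
  have htx : tMat n R b * xiInvMat n R * (xiMat n R * tMat n R a) = 1 := by
    rw [mul_assoc, ← mul_assoc (xiInvMat n R), xiInvMat_mul_xiMat, Matrix.one_mul, tMat_mul,
      mul_comm, hab, tMat_one]
  rw [← exists_mem_eq_mul_mul_iff hxt htx]
  simp only [mul_assoc]

theorem iotaBlk_one_wMat_mul_self :
    iotaBlk 1 (wMat n R) * iotaBlk 1 (wMat n R) = 1 := by
  rw [iotaBlk_mul_iotaBlk, wMat_mul_self, Matrix.one_mul, iotaBlk_one_one]

theorem iotaBlk_wMat_conj (H₁ H₂ : Matrix (Fin n) (Fin n) R) :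
    iotaBlk 1 (wMat n R) * iotaBlk H₁ H₂ * iotaBlk 1 (wMat n R) =
      iotaBlk H₁ (wMat n R * H₂ * wMat n R) := by
  simp [iotaBlk_mul_iotaBlk]

theorem fromBlocks_one_mul_iotaBlk (E A C : Matrix (Fin n) (Fin n) R) :
    Matrix.fromBlocks 1 E 0 1 * iotaBlk A C = Matrix.fromBlocks A (E * C) 0 C := by
  simp [iotaBlk, Matrix.fromBlocks_multiply]

end BlockMatrices

theorem Matrix.exists_eq_smul_of_forall_mem_span_singleton {m n R : Type*} [CommRing R]
    {A : Matrix m n R} {a : R} (h : ∀ i j, A i j ∈ Ideal.span {a}) : ∃ D, A = a • D := by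
  choose D hD using fun i j => Ideal.mem_span_singleton'.1 (h i j)
  exact ⟨Matrix.of D, by ext i j; simp [← hD, mul_comm]⟩

section Integral

variable {O F : Type*} [CommRing O] [Field F] (φ : O →+* F)

theorem dvd_of_inv_mul_mem_range (hinj : Function.Injective φ) {a x : O} (ha : φ a ≠ 0)
    (h : (φ a)⁻¹ * φ x ∈ φ.range) : a ∣ x := by
  obtain ⟨y, hy⟩ := h
  refine ⟨y, hinj ?_⟩
  rw [map_mul, hy, mul_inv_cancel_left₀ ha]

theorem fromBlocks_one_mul_mem_iff {ι : Type*} [Fintype ι] [DecidableEq ι]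
    {K : Set (Matrix (ι ⊕ ι) (ι ⊕ ι) F)} (hKmul : ∀ a ∈ K, ∀ b ∈ K, a * b ∈ K)
    (hKU : ∀ X : Matrix ι ι O, Matrix.fromBlocks 1 (X.map φ) 0 1 ∈ K) (X : Matrix ι ι O)
    (g : Matrix (ι ⊕ ι) (ι ⊕ ι) F) :
    Matrix.fromBlocks 1 (X.map φ) 0 1 * g ∈ K ↔ g ∈ K := by
  refine ⟨fun h => ?_, hKmul _ (hKU X) g⟩
  have hinv : (Matrix.fromBlocks 1 ((-X).map φ) 0 1 : Matrix (ι ⊕ ι) (ι ⊕ ι) F) *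
      Matrix.fromBlocks 1 (X.map φ) 0 1 = 1 := by
    simp [Matrix.fromBlocks_multiply, Matrix.map_neg]
  simpa [← mul_assoc, hinv] using hKmul _ (hKU (-X)) _ h

variable {n : ℕ} {K : Set (Matrix (Fin n ⊕ Fin n) (Fin n ⊕ Fin n) F)}

theorem fromBlocks_inv_smul_sub_mem_iff_of_sub_eq_smul
    (hKmul : ∀ a ∈ K, ∀ b ∈ K, a * b ∈ K)
    (hKU : ∀ X : Matrix (Fin n) (Fin n) O, Matrix.fromBlocks 1 (X.map φ) 0 1 ∈ K)
    {a : O} (ha : φ a ≠ 0) {h₁ h₂ D : Matrix (Fin n) (Fin n) O} (hD : h₁ - h₂ = a • D)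
    (hu₂ : IsUnit h₂) :
    Matrix.fromBlocks (h₁.map φ) ((φ a)⁻¹ • ((h₁.map φ - h₂.map φ) * wMat n F)) 0
        (wMat n F * h₂.map φ * wMat n F) ∈ K ↔
      iotaBlk (h₁.map φ) (wMat n F * h₂.map φ * wMat n F) ∈ K := by
  obtain ⟨h₂', hh₂'⟩ := hu₂.exists_left_inv
  set E := D * h₂' * wMat n O
  have hE : E * (wMat n O * h₂ * wMat n O) = D * wMat n O := by
    simp only [E, mul_assoc, ← mul_assoc (wMat n O) (wMat n O), wMat_mul_self, Matrix.one_mul]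
    rw [← mul_assoc h₂', hh₂', Matrix.one_mul]
  have hDF : h₁.map φ - h₂.map φ = φ a • D.map φ := by
    ext i j
    simpa using congrArg φ (congrFun (congrFun hD i) j)
  have hB : (φ a)⁻¹ • ((h₁.map φ - h₂.map φ) * wMat n F) =
      E.map φ * (wMat n F * h₂.map φ * wMat n F) := by
    rw [hDF, Matrix.smul_mul, smul_smul, inv_mul_cancel₀ ha, one_smul, ← wMat_map φ,
      ← Matrix.map_mul, ← Matrix.map_mul, ← hE]
    simp only [Matrix.map_mul]
  rw [hB, ← fromBlocks_one_mul_iotaBlk, fromBlocks_one_mul_mem_iff φ hKmul hKU]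

theorem fromBlocks_inv_smul_sub_mem_iff (hinj : Function.Injective φ)
    (hKmul : ∀ a ∈ K, ∀ b ∈ K, a * b ∈ K)
    (hKO : ∀ g ∈ K, ∀ i j, g i j ∈ φ.range)
    (hKU : ∀ X : Matrix (Fin n) (Fin n) O, Matrix.fromBlocks 1 (X.map φ) 0 1 ∈ K)
    {a : O} (ha : φ a ≠ 0) {h₁ h₂ : Matrix (Fin n) (Fin n) O} (hu₂ : IsUnit h₂) :
    Matrix.fromBlocks (h₁.map φ) ((φ a)⁻¹ • ((h₁.map φ - h₂.map φ) * wMat n F)) 0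
        (wMat n F * h₂.map φ * wMat n F) ∈ K ↔
      iotaBlk (h₁.map φ) (wMat n F * h₂.map φ * wMat n F) ∈ K ∧
        ∀ i j, h₁ i j - h₂ i j ∈ Ideal.span {a} := by
  constructor
  · intro hM
    have hcong : ∀ i j, h₁ i j - h₂ i j ∈ Ideal.span {a} := fun i j => by
      rw [Ideal.mem_span_singleton]
      refine dvd_of_inv_mul_mem_range φ hinj ha ?_
      -- the `(i, j.rev)` entry of the upper right block is `(φ a)⁻¹ * φ (h₁ i j - h₂ i j)`
      simpa [mul_wMat_apply] using hKO _ hM (Sum.inl i) (Sum.inr j.rev)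
    obtain ⟨D, hD⟩ := Matrix.exists_eq_smul_of_forall_mem_span_singleton hcong
    exact
      ⟨(fromBlocks_inv_smul_sub_mem_iff_of_sub_eq_smul φ hKmul hKU ha hD hu₂).1 hM, hcong⟩
  · rintro ⟨hN, hcong⟩
    obtain ⟨D, hD⟩ := Matrix.exists_eq_smul_of_forall_mem_span_singleton hcong
    exact (fromBlocks_inv_smul_sub_mem_iff_of_sub_eq_smul φ hKmul hKU ha hD hu₂).2 hN

end Integral

theorem statement4_general (n : ℕ)
    (O : Type*) [CommRing O]
    (F : Type*) [Field F] [Algebra O F] [IsFractionRing O F]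
    (ϖ : O) (hϖ : Irreducible ϖ) (β : ℕ)
    (K : Set (Matrix (Fin n ⊕ Fin n) (Fin n ⊕ Fin n) F))
    (hKmul : ∀ a ∈ K, ∀ b ∈ K, a * b ∈ K)
    (hKO : ∀ g ∈ K, ∀ i j, g i j ∈ (algebraMap O F).range)
    (hKU : ∀ X : Matrix (Fin n) (Fin n) O,
      Matrix.fromBlocks 1 (X.map (algebraMap O F)) 0 1 ∈ K)
    (h₁ h₂ : Matrix (Fin n) (Fin n) O) (hu₂ : IsUnit h₂) :
    (iotaBlk (h₁.map (algebraMap O F)) (h₂.map (algebraMap O F)) ∈ K ∧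
      (∃ k ∈ K, iotaBlk (h₁.map (algebraMap O F)) (h₂.map (algebraMap O F)) =
        xiMat n F * tMat n F (algebraMap O F ϖ) ^ β * k *
          tMat n F (algebraMap O F ϖ)⁻¹ ^ β * xiInvMat n F))
    ↔
    (iotaBlk (h₁.map (algebraMap O F)) (h₂.map (algebraMap O F)) ∈ K ∧
      (∃ k ∈ K, iotaBlk (h₁.map (algebraMap O F)) (h₂.map (algebraMap O F)) =
        iotaBlk 1 (wMat n F) * k * iotaBlk 1 (wMat n F)) ∧
      ∀ i j : Fin n, h₁ i j - h₂ i j ∈ Ideal.span {ϖ ^ β}) := by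
  have hinj : Function.Injective (algebraMap O F) := IsFractionRing.injective O F
  have hp : algebraMap O F (ϖ ^ β) ≠ 0 := by
    rw [map_pow]
    exact pow_ne_zero β ((map_ne_zero_iff _ hinj).2 hϖ.ne_zero)
  simp only [tMat_pow, inv_pow, ← map_pow]
  rw [exists_mem_xiMat_conj_iff (mul_inv_cancel₀ hp),
    exists_mem_eq_mul_mul_iff iotaBlk_one_wMat_mul_self iotaBlk_one_wMat_mul_self,
    tMat_mul_xiInvMat_mul_iotaBlk_mul (mul_inv_cancel₀ hp), iotaBlk_wMat_conj,
    fromBlocks_inv_smul_sub_mem_iff _ hinj hKmul hKO hKU hp hu₂]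

/-- For a subgroup `K` of `GL_{2n}(O)` containing all the matrices `[[1, X], [0, 1]]`,
`X ∈ M_n(O)`, and for `h₁, h₂ ∈ GL_n(O)`, one has
`ι(h₁,h₂) ∈ K ∩ ξ t^β K t^{-β} ξ⁻¹` if and only if
`ι(h₁,h₂) ∈ K ∩ ι(1,w_n) K ι(1,w_n)` and `h₁ - h₂ ∈ ϖ^β M_n(O)`. -/
theorem statement4 (n : ℕ) (hn : 1 ≤ n)
    (O : Type*) [CommRing O] [IsDomain O] [IsDiscreteValuationRing O]
    (F : Type*) [Field F] [Algebra O F] [IsFractionRing O F]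
    (ϖ : O) (hϖ : Irreducible ϖ) (β : ℕ)
    (K : Set (Matrix (Fin n ⊕ Fin n) (Fin n ⊕ Fin n) F))
    (hK1 : (1 : Matrix (Fin n ⊕ Fin n) (Fin n ⊕ Fin n) F) ∈ K)
    (hKmul : ∀ a ∈ K, ∀ b ∈ K, a * b ∈ K)
    (hKinv : ∀ a ∈ K, ∃ b ∈ K, a * b = 1 ∧ b * a = 1)
    (hKO : ∀ g ∈ K, ∀ i j, g i j ∈ (algebraMap O F).range)
    (hKU : ∀ X : Matrix (Fin n) (Fin n) O,
      Matrix.fromBlocks 1 (X.map (algebraMap O F)) 0 1 ∈ K)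
    (h₁ h₂ : Matrix (Fin n) (Fin n) O) (hu₁ : IsUnit h₁) (hu₂ : IsUnit h₂) :
    (iotaBlk (h₁.map (algebraMap O F)) (h₂.map (algebraMap O F)) ∈ K ∧
      (∃ k ∈ K, iotaBlk (h₁.map (algebraMap O F)) (h₂.map (algebraMap O F)) =
        xiMat n F * tMat n F (algebraMap O F ϖ) ^ β * k *
          tMat n F (algebraMap O F ϖ)⁻¹ ^ β * xiInvMat n F))
    ↔
    (iotaBlk (h₁.map (algebraMap O F)) (h₂.map (algebraMap O F)) ∈ K ∧
      (∃ k ∈ K, iotaBlk (h₁.map (algebraMap O F)) (h₂.map (algebraMap O F)) =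
        iotaBlk 1 (wMat n F) * k * iotaBlk 1 (wMat n F)) ∧
      ∀ i j : Fin n, h₁ i j - h₂ i j ∈ Ideal.span {ϖ ^ β}) :=
  statement4_general n O F ϖ hϖ β K hKmul hKO hKU h₁ h₂ hu₂
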